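/- For distributions P_L indexed by L ~ μ on a finite set X, any D, Q, and ε, τ > 0: Pr_{L~μ}[d_TV(P_L,D) < ε] ≤ max{ frac(μ,Q,τ), Pr_{L~μ}[d_TV(P_L,Q) ≤ 2ε+τ] }, where frac(μ,Q,τ) := sup_{φ:X→[−1,1]} Pr_{L~μ}[|E_{P_L}[φ]−E_Q[φ]| ≥ τ]. -/

import Mathlib

/-
Split on the distance from `D` to `Q`. If `d_TV(D,Q) ≤ ε+τ`, every `P_L` in the `ε`-ball around `D`
lies within `2ε+τ` of `Q` by the triangle inequality. Otherwise the sign test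
`φ = sign(D - Q)` separates `D` from `Q` by `2 d_TV(D,Q) > 2ε+2τ`, while it moves by less than
`2ε` between `D` and any `P_L` of the ball; so every such `P_L` is `τ`-distinguished from `Q` by
the single test `φ`, and the ball's weight is at most `frac(μ,Q,τ)`.
-/

open Finset MeasureTheory

/-- Total variation distance between distributions on a finite set. -/
noncomputable def dTV {X : Type*} [Fintype X] (P Q : X → ℝ) : ℝ :=
  (1 / 2) * ∑ x, |P x - Q x|

section TotalVariation

variable {X : Type*} [Fintype X]

lemma dTV_triangle (P R Q : X → ℝ) : dTV P Q ≤ dTV P R + dTV R Q := by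
  unfold dTV
  rw [← mul_add, ← sum_add_distrib]
  gcongr with x
  exact abs_sub_le _ _ _

lemma abs_sum_mul_sub_sum_mul_le_two_mul_dTV {φ : X → ℝ} (hφ : ∀ x, |φ x| ≤ 1)
    (P Q : X → ℝ) : |∑ x, φ x * P x - ∑ x, φ x * Q x| ≤ 2 * dTV P Q := by
  unfold dTV
  rw [← sum_sub_distrib]
  calc |∑ x, (φ x * P x - φ x * Q x)| ≤ ∑ x, |φ x * P x - φ x * Q x| := abs_sum_le_sum_abs _ _
    _ ≤ ∑ x, |P x - Q x| := sum_le_sum fun x _ ↦ by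
        rw [← mul_sub, abs_mul]
        exact mul_le_of_le_one_left (abs_nonneg _) (hφ x)
    _ = 2 * (1 / 2 * ∑ x, |P x - Q x|) := by ring

lemma sum_sign_mul_sub_sum_sign_mul_eq_two_mul_dTV (D Q : X → ℝ) :
    ∑ x, (SignType.sign (D x - Q x) : ℝ) * D x - ∑ x, (SignType.sign (D x - Q x) : ℝ) * Q x
      = 2 * dTV D Q := by
  unfold dTV
  simp only [← sum_sub_distrib, ← mul_sub, sign_mul_self]
  ring

lemma abs_sign_le_one (r : ℝ) : |(SignType.sign r : ℝ)| ≤ 1 := by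
  rcases lt_trichotomy r 0 with h | rfl | h <;> simp [*]

lemma le_abs_sum_sign_mul_sub_of_dTV_lt {R D Q : X → ℝ} {ε τ : ℝ} (hR : dTV R D < ε)
    (hDQ : ε + τ < dTV D Q) :
    τ ≤ |∑ x, (SignType.sign (D x - Q x) : ℝ) * R x
          - ∑ x, (SignType.sign (D x - Q x) : ℝ) * Q x| := by
  set φ : X → ℝ := fun x ↦ SignType.sign (D x - Q x)
  have hRD := abs_le.mp <|
    abs_sum_mul_sub_sum_mul_le_two_mul_dTV (fun x ↦ abs_sign_le_one (D x - Q x)) R D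
  have hφDQ : ∑ x, φ x * D x - ∑ x, φ x * Q x = 2 * dTV D Q :=
    sum_sign_mul_sub_sum_sign_mul_eq_two_mul_dTV D Q
  -- the gap exceeds `2τ`, which together with `0 ≤ |gap|` gives `τ ≤ |gap|` for either sign of `τ`
  linarith [le_abs_self (∑ x, φ x * R x - ∑ x, φ x * Q x),
    abs_nonneg (∑ x, φ x * R x - ∑ x, φ x * Q x)]

end TotalVariation

theorem heaviest_ball_weight_bound_general
    {X : Type*} [Fintype X] {Ω : Type*} [MeasurableSpace Ω]
    (μ : Measure Ω)
    (P : Ω → X → ℝ) (Q D : X → ℝ)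
    (ε τ : ℝ) :
    μ {ω | dTV (P ω) D < ε}
      ≤ max
          (⨆ φ : {φ : X → ℝ // ∀ x, |φ x| ≤ 1},
            μ {ω | τ ≤ |∑ x, φ.1 x * P ω x - ∑ x, φ.1 x * Q x|})
          (μ {ω | dTV (P ω) Q ≤ 2 * ε + τ}) := by
  by_cases hDQ : dTV D Q ≤ ε + τ
  · refine le_max_of_le_right (measure_mono fun ω (hω : dTV (P ω) D < ε) ↦ ?_)
    change dTV (P ω) Q ≤ 2 * ε + τ
    linarith [dTV_triangle (P ω) D Q]
  · let φ : {φ : X → ℝ // ∀ x, |φ x| ≤ 1} :=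
      ⟨fun x ↦ SignType.sign (D x - Q x), fun x ↦ abs_sign_le_one _⟩
    refine le_max_of_le_left (le_iSup_of_le φ (measure_mono fun ω hω ↦ ?_))
    exact le_abs_sum_sign_mul_sub_of_dTV_lt hω (not_le.mp hDQ)

/-- **controlling the heaviest `ε`-ball.** For distributions `P_L`
indexed by `L ∼ μ` on a finite set `X`, any distributions `D, Q`, and `ε, τ > 0`:
`Pr_{L∼μ}[d_TV(P_L,D) < ε]
  ≤ max { frac(μ,Q,τ), Pr_{L∼μ}[d_TV(P_L,Q) ≤ 2ε+τ] }`,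
where `frac(μ,Q,τ) := sup_{φ : X→[−1,1]} Pr_{L∼μ}[|E_{P_L}[φ] − E_Q[φ]| ≥ τ]`. -/
theorem heaviest_ball_weight_bound
    {X : Type*} [Fintype X] {Ω : Type*} [MeasurableSpace Ω]
    (μ : Measure Ω) [IsProbabilityMeasure μ]
    (P : Ω → X → ℝ) (Q D : X → ℝ)
    (hP0 : ∀ ω x, 0 ≤ P ω x) (hP1 : ∀ ω, ∑ x, P ω x = 1)
    (hQ0 : ∀ x, 0 ≤ Q x) (hQ1 : ∑ x, Q x = 1)
    (hD0 : ∀ x, 0 ≤ D x) (hD1 : ∑ x, D x = 1)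
    (ε τ : ℝ) (hε : 0 < ε) (hτ : 0 < τ) :
    μ {ω | dTV (P ω) D < ε}
      ≤ max
          (⨆ φ : {φ : X → ℝ // ∀ x, |φ x| ≤ 1},
            μ {ω | τ ≤ |∑ x, φ.1 x * P ω x - ∑ x, φ.1 x * Q x|})
          (μ {ω | dTV (P ω) Q ≤ 2 * ε + τ}) :=
  heaviest_ball_weight_bound_general μ P Q D ε τ
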